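/- In the College Admissions problem with lower quotas, every college that fills its lower quota in the stable matchings of the instance where all lower quotas are ignored (all colleges open) must be open in every stable matching that respects the lower quotas. -/
import Mathlib


open Finset
open scoped Classical

open Finset

/-- Feasibility of a (0/1-encoded) matching `x` for a College Admissions
instance with application set `E` and upper quotas `u`: each variable is
binary, only actual applications can be matched, each applicant is assigned
to at most one college, and no college exceeds its quota. -/
def Feasible {n m : ℕ} (E : Finset (Fin n × Fin m)) (u : Fin m → ℕ)
    (x : Fin n → Fin m → ℕ) : Prop :=
  (∀ i j, x i j ≤ 1) ∧ (∀ i j, x i j = 1 → (i, j) ∈ E) ∧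
  (∀ i : Fin n, ∑ j, x i j ≤ 1) ∧ (∀ j : Fin m, ∑ i, x i j ≤ u j)

/-- Classical stability: there is no application `(i, j)` such that `i` is
unmatched or prefers `j` to her assigned college (rank `r`, lower is better),
while `j` has an unfilled place or admits an applicant with a lower score. -/
def Stable {n m : ℕ} (E : Finset (Fin n × Fin m)) (r s : Fin n → Fin m → ℕ)
    (u : Fin m → ℕ) (x : Fin n → Fin m → ℕ) : Prop :=
  ¬ ∃ i j, (i, j) ∈ E ∧
    (∀ k, x i k = 1 → r i j < r i k) ∧
    ((∑ h, x h j) < u j ∨ ∃ h, x h j = 1 ∧ s h j < s i j)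


/-- Stability for the College Admissions problem with lower quotas `l` and
upper quotas `u`, with `o j = 1` iff college `j` is open: the matching is
feasible (closed colleges empty, open colleges between their quotas), no
application blocks with an open college in the classical sense, and no
closed college has at least `l j` applicants who are unmatched or prefer it
to their assignment. -/
noncomputable def LQStable {n m : ℕ} (E : Finset (Fin n × Fin m))
    (r s : Fin n → Fin m → ℕ) (l u : Fin m → ℕ)
    (x : Fin n → Fin m → ℕ) (o : Fin m → ℕ) : Prop :=
  (∀ i j, x i j ≤ 1) ∧ (∀ j, o j ≤ 1) ∧ (∀ i j, x i j = 1 → (i, j) ∈ E) ∧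
  (∀ i : Fin n, ∑ j, x i j ≤ 1) ∧
  (∀ j, o j = 1 → l j ≤ ∑ i, x i j ∧ ∑ i, x i j ≤ u j) ∧
  (∀ j, o j = 0 → ∑ i, x i j = 0) ∧
  (¬ ∃ i j, (i, j) ∈ E ∧ o j = 1 ∧
    (∀ k, x i k = 1 → r i j < r i k) ∧
    ((∑ h, x h j) < u j ∨ ∃ h, x h j = 1 ∧ s h j < s i j)) ∧
  (∀ j, o j = 0 →
    (Finset.univ.filter fun i =>
      (i, j) ∈ E ∧ ∀ k, x i k = 1 → r i j < r i k).card < l j)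

lemma sum_eq_card_filter' {n : ℕ} (f : Fin n → ℕ) (hf : ∀ i, f i ≤ 1) :
    ∑ i, f i = (Finset.univ.filter fun i => f i = 1).card := by
  rw [Finset.card_filter]
  refine Finset.sum_congr rfl fun i _ => ?_
  have := hf i; split_ifs with h <;> omega

lemma row_unique' {m : ℕ} (f : Fin m → ℕ) (hrow : ∑ j, f j ≤ 1)
    {k k' : Fin m} (hk : f k = 1) (hk' : f k' = 1) : k = k' := by
  by_contra hne
  have h2 : f k + f k' ≤ ∑ j, f j := by
    have := Finset.sum_le_sum_of_subset (f := f) (Finset.subset_univ {k, k'})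
    rwa [Finset.sum_pair hne] at this
  omega

/-- If a college fills its lower quota in the stable
matchings of the instance where all lower quotas are ignored (all colleges
open), then it is open in every stable matching respecting the lower
quotas. -/
theorem fills_lower_quota_open {n m : ℕ} (E : Finset (Fin n × Fin m))
    (r s : Fin n → Fin m → ℕ) (l u : Fin m → ℕ)
    (hrstrict : ∀ i j k, (i, j) ∈ E → (i, k) ∈ E → r i j = r i k → j = k)
    (hsstrict : ∀ j i i', (i, j) ∈ E → (i', j) ∈ E → s i j = s i' j → i = i')
    (j₀ : Fin m)
    (hfills : ∃ x₀, Feasible E u x₀ ∧ Stable E r s u x₀ ∧ l j₀ ≤ ∑ i, x₀ i j₀) :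
    ∀ x o, LQStable E r s l u x o → o j₀ = 1 := by
  intro x o hLQ
  by_contra ho1
  obtain ⟨x₀, ⟨hx01, hx0E, hx0row, hx0col⟩, hS, hl⟩ := hfills
  obtain ⟨hx1, ho, hxE, hxrow, hopen, hclosed0, hnoblock, hclosedquota⟩ := hLQ
  have ho0 : o j₀ = 0 := by have := ho j₀; omega
  have hxj₀sum : ∑ i, x i j₀ = 0 := hclosed0 j₀ ho0
  have hxij0 : ∀ i, x i j₀ = 0 := by
    intro i
    exact Finset.sum_eq_zero_iff.mp hxj₀sum i (Finset.mem_univ i)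
  -- sets
  set A : Fin m → Finset (Fin n) :=
    fun k => Finset.univ.filter fun i => x₀ i k = 1 with hA
  set B : Fin m → Finset (Fin n) :=
    fun k => Finset.univ.filter fun i => x i k = 1 with hB
  set Q : Finset (Fin n) := Finset.univ.filter
    (fun i => ∃ k k₀, x i k = 1 ∧ x₀ i k₀ = 1 ∧ r i k < r i k₀) with hQ
  set K : Finset (Fin m) := Finset.univ.filter
    (fun k => ∃ i ∈ Q, x i k = 1) with hK
  have memA : ∀ i k, i ∈ A k ↔ x₀ i k = 1 := by
    intro i k; simp [hA]
  have memB : ∀ i k, i ∈ B k ↔ x i k = 1 := by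
    intro i k; simp [hB]
  have memQ : ∀ i, i ∈ Q ↔ ∃ k k₀, x i k = 1 ∧ x₀ i k₀ = 1 ∧ r i k < r i k₀ := by
    intro i; simp [hQ]
  have memK : ∀ k, k ∈ K ↔ ∃ i ∈ Q, x i k = 1 := by
    intro k; simp only [hK, Finset.mem_filter, Finset.mem_univ, true_and]
  have cardA : ∀ k, (A k).card = ∑ i, x₀ i k := by
    intro k; rw [sum_eq_card_filter' _ (fun i => hx01 i k)]
  have cardB : ∀ k, (B k).card = ∑ i, x i k := by
    intro k; rw [sum_eq_card_filter' _ (fun i => hx1 i k)]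
  -- colleges with a matched student in x are open
  have hopenk : ∀ i k, x i k = 1 → o k = 1 := by
    intro i k hik
    have h1 : x i k ≤ ∑ h, x h k :=
      Finset.single_le_sum (f := fun h => x h k) (fun h _ => Nat.zero_le _)
        (Finset.mem_univ i)
    have h2 := ho k
    by_contra hok
    have : o k = 0 := by omega
    have := hclosed0 k this
    omega
  -- students in Q are not at their x-college in x₀
  have hQnotA : ∀ i k k₀, x i k = 1 → x₀ i k₀ = 1 → r i k < r i k₀ →
      x₀ i k ≠ 1 := by
    intro i k k₀ hik hik₀ hr h
    have : k = k₀ := row_unique' _ (hx0row i) h hik₀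
    subst this; omega
  -- stability of x₀ against Q-students: x₀-full and better scores at k ∈ K
  have hstab : ∀ i k k₀, x i k = 1 → x₀ i k₀ = 1 → r i k < r i k₀ →
      u k ≤ ∑ h, x₀ h k ∧ ∀ h, x₀ h k = 1 → s i k < s h k := by
    intro i k k₀ hik hik₀ hr
    have hiE : (i, k) ∈ E := hxE i k hik
    have hpref : ∀ k', x₀ i k' = 1 → r i k < r i k' := by
      intro k' h
      have : k' = k₀ := row_unique' _ (hx0row i) h hik₀
      subst this; exact hr
    constructor
    · by_contra hlt
      exact hS ⟨i, k, hiE, hpref, Or.inl (by omega)⟩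
    · intro h hh
      have hle : ¬ s h k < s i k := by
        intro hcon
        exact hS ⟨i, k, hiE, hpref, Or.inr ⟨h, hh, hcon⟩⟩
      have hne : i ≠ h := by
        intro heq; subst heq
        exact hQnotA i k k₀ hik hik₀ hr hh
      have : s i k ≠ s h k := by
        intro heq
        exact hne (hsstrict k i h hiE (hx0E h k hh) heq)
      omega
  -- key: for k ∈ K, A k \ B k ⊆ Q
  have hkey : ∀ k ∈ K, A k \ B k ⊆ Q := by
    intro k hk h hmem
    rw [Finset.mem_sdiff, memA, memB] at hmem
    obtain ⟨hhk, hhnB⟩ := hmem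
    obtain ⟨i, hiQ, hik⟩ := (memK k).mp hk
    obtain ⟨k', k₀, hik', hik₀, hr⟩ := (memQ i).mp hiQ
    have hk'k : k' = k := row_unique' _ (hxrow i) hik' hik
    subst hk'k
    have hsc := (hstab i k' k₀ hik hik₀ hr).2 h hhk
    -- (h, k') would block x unless h has a strictly better x-partner
    have hhE : (h, k') ∈ E := hx0E h k' hhk
    have hok : o k' = 1 := hopenk i k' hik
    have : ¬ ∀ k2, x h k2 = 1 → r h k' < r h k2 := by
      intro hall
      exact hnoblock ⟨h, k', hhE, hok, hall, Or.inr ⟨i, hik, hsc⟩⟩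
    push_neg at this
    obtain ⟨k₂, hhk₂, hr₂⟩ := this
    have hne : k₂ ≠ k' := by
      intro heq; subst heq; exact hhnB hhk₂
    have hrlt : r h k₂ < r h k' := by
      rcases lt_or_eq_of_le hr₂ with h1 | h1
      · exact h1
      · exact absurd (hrstrict h k₂ k' (hxE h k₂ hhk₂) hhE h1) hne
    exact (memQ h).mpr ⟨k₂, k', hhk₂, hhk, hrlt⟩
  -- cardinalities: for k ∈ K, |A k \ B k| ≥ |B k \ A k|
  have hcardge : ∀ k ∈ K, (B k \ A k).card ≤ (A k \ B k).card := by
    intro k hk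
    obtain ⟨i, hiQ, hik⟩ := (memK k).mp hk
    obtain ⟨k', k₀, hik', hik₀, hr⟩ := (memQ i).mp hiQ
    have hk'k : k' = k := row_unique' _ (hxrow i) hik' hik
    subst hk'k
    have hfull := (hstab i k' k₀ hik hik₀ hr).1
    have hAcard : u k' ≤ (A k').card := by rw [cardA]; exact hfull
    have hBcard : (B k').card ≤ u k' := by
      rw [cardB]; exact (hopen k' (hopenk i k' hik)).2
    have h1 := Finset.card_sdiff_add_card_inter (A k') (B k')
    have h2 := Finset.card_sdiff_add_card_inter (B k') (A k')
    rw [Finset.inter_comm] at h2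
    omega
  -- disjointness of the families over K
  have hdisjA : ∀ k ∈ K, ∀ k' ∈ K, k ≠ k' →
      Disjoint (A k \ B k) (A k' \ B k') := by
    intro k _ k' _ hne
    rw [Finset.disjoint_left]
    intro i hi hi'
    rw [Finset.mem_sdiff, memA] at hi hi'
    exact hne (row_unique' _ (hx0row i) hi.1 hi'.1)
  have hdisjB : ∀ k ∈ K, ∀ k' ∈ K, k ≠ k' →
      Disjoint (B k \ A k) (B k' \ A k') := by
    intro k _ k' _ hne
    rw [Finset.disjoint_left]
    intro i hi hi'
    rw [Finset.mem_sdiff, memB] at hi hi'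
    exact hne (row_unique' _ (hxrow i) hi.1 hi'.1)
  -- Q ⊆ ⋃_{k∈K} (B k \ A k)
  have hQsub : Q ⊆ K.biUnion (fun k => B k \ A k) := by
    intro i hiQ
    obtain ⟨k, k₀, hik, hik₀, hr⟩ := (memQ i).mp hiQ
    refine Finset.mem_biUnion.mpr ⟨k, (memK k).mpr ⟨i, hiQ, hik⟩, ?_⟩
    rw [Finset.mem_sdiff, memB, memA]
    exact ⟨hik, hQnotA i k k₀ hik hik₀ hr⟩
  -- ⋃_{k∈K} (A k \ B k) ⊆ Q
  have hSsub : K.biUnion (fun k => A k \ B k) ⊆ Q := by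
    intro i hi
    obtain ⟨k, hk, hmem⟩ := Finset.mem_biUnion.mp hi
    exact hkey k hk hmem
  -- the counting argument forces equality
  have hcardS1 : (K.biUnion (fun k => A k \ B k)).card
      = ∑ k ∈ K, (A k \ B k).card := Finset.card_biUnion hdisjA
  have hcardS2 : (K.biUnion (fun k => B k \ A k)).card
      = ∑ k ∈ K, (B k \ A k).card := Finset.card_biUnion hdisjB
  have hQle : Q.card ≤ ∑ k ∈ K, (B k \ A k).card := by
    rw [← hcardS2]; exact Finset.card_le_card hQsub
  have hsumle : ∑ k ∈ K, (B k \ A k).card ≤ ∑ k ∈ K, (A k \ B k).card :=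
    Finset.sum_le_sum hcardge
  have hS1le : (K.biUnion (fun k => A k \ B k)).card ≤ Q.card :=
    Finset.card_le_card hSsub
  have hQeq : Q = K.biUnion (fun k => A k \ B k) :=
    (Finset.eq_of_subset_of_card_le hSsub (by omega)).symm
  -- j₀ ∉ K
  have hj₀K : j₀ ∉ K := by
    intro hk
    obtain ⟨i, _, hik⟩ := (memK j₀).mp hk
    have := hxij0 i
    omega
  -- no student of A j₀ is in Q
  have hnoQ : ∀ i, x₀ i j₀ = 1 → i ∉ Q := by
    intro i hij₀ hiQ
    rw [hQeq] at hiQ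
    obtain ⟨k, hkK, hmem⟩ := Finset.mem_biUnion.mp hiQ
    rw [Finset.mem_sdiff, memA] at hmem
    have : k = j₀ := row_unique' _ (hx0row i) hmem.1 hij₀
    subst this
    exact hj₀K hkK
  -- hence A j₀ ⊆ the set of students desiring j₀
  have hsubfilter : A j₀ ⊆ Finset.univ.filter
      (fun i => (i, j₀) ∈ E ∧ ∀ k2 : Fin m, x i k2 = 1 → r i j₀ < r i k2) := by
    intro i hi
    rw [memA] at hi
    rw [Finset.mem_filter]
    refine ⟨Finset.mem_univ i, hx0E i j₀ hi, ?_⟩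
    intro k hik
    by_contra hrle
    have hne : k ≠ j₀ := by
      intro heq; subst heq; have := hxij0 i; omega
    have hrlt : r i k < r i j₀ := by
      rcases lt_or_eq_of_le (Nat.le_of_not_lt hrle) with h1 | h1
      · exact h1
      · exact absurd (hrstrict i k j₀ (hxE i k hik) (hx0E i j₀ hi) h1) hne
    exact hnoQ i hi ((memQ i).mpr ⟨k, j₀, hik, hi, hrlt⟩)
  have hcardfilter := Finset.card_le_card hsubfilter
  have hAj₀ : l j₀ ≤ (A j₀).card := by rw [cardA]; exact hl
  have := hclosedquota j₀ ho0
  omega
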